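/- arXiv:2310.11115 — 3 statements merged into one kernel-verified Lean document; each statement's English description precedes it below -/
import Mathlib

section
/- For every ρ ∈ (0, α) there exists a constant C < ∞ (depending on ρ) such that for every n ∈ ℕ with n ≥ 1 and every λ ≥ 1, P(S_n ≥ λ v_α(n)) ≤ C λ^{−ρ}. -/
open MeasureTheory ProbabilityTheory Filter

/-- The scaling function `v_α`. -/
noncomputable def vAlpha (α r : ℝ) : ℝ :=
  if α < 1 then r ^ (1 / α) else if α = 1 then r * max 1 (Real.log r) else r

private lemma exp_le_one_add_aux {x : ℝ} (h0 : 0 ≤ x) (h1 : x ≤ 1) :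
    Real.exp x ≤ 1 + (Real.exp 1 - 1) * x := by
  have h := convexOn_exp.2 (Set.mem_univ (0:ℝ)) (Set.mem_univ (1:ℝ))
    (by linarith : (0:ℝ) ≤ 1 - x) h0 (by ring)
  simp only [smul_eq_mul, mul_zero, mul_one, Real.exp_zero, zero_add] at h
  nlinarith [h]

private lemma vAlpha_one_le (α : ℝ) (hα : 0 < α) (n : ℕ) (hn : 1 ≤ n) :
    1 ≤ vAlpha α n := by
  have hn1 : (1:ℝ) ≤ (n:ℝ) := by exact_mod_cast hn
  unfold vAlpha
  split_ifs with h1 h2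
  · exact Real.one_le_rpow hn1 (by positivity)
  · have h := le_max_left (1:ℝ) (Real.log n)
    nlinarith
  · exact hn1

private lemma le_vAlpha_rpow (α : ℝ) (hα : 0 < α) (n : ℕ) (hn : 1 ≤ n) :
    (n:ℝ) ≤ (vAlpha α n) ^ α := by
  have hn1 : (1:ℝ) ≤ (n:ℝ) := by exact_mod_cast hn
  have hn0 : (0:ℝ) ≤ (n:ℝ) := by positivity
  unfold vAlpha
  split_ifs with h1 h2
  · rw [← Real.rpow_mul hn0, one_div_mul_cancel hα.ne', Real.rpow_one]
  · rw [h2, Real.rpow_one]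
    exact le_mul_of_one_le_right hn0 (le_max_left _ _)
  · calc (n:ℝ) = (n:ℝ) ^ (1:ℝ) := (Real.rpow_one _).symm
      _ ≤ (n:ℝ) ^ α := Real.rpow_le_rpow_of_exponent_le hn1 (by push_neg at h1 h2; linarith [lt_of_le_of_ne h1 (Ne.symm h2)])

private lemma core_bound
    {Ω : Type*} [MeasurableSpace Ω] (P : Measure Ω) [IsProbabilityMeasure P]
    (α : ℝ) (hα : 0 < α)
    (τ : ℕ → Ω → ℝ) (hmeas : ∀ i, Measurable (τ i))
    (hindep : iIndepFun τ P)
    (hident : ∀ i, IdentDistrib (τ i) (τ 0) P P)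
    (htail : ∀ u : ℝ, 1 ≤ u → P {ω | u ≤ τ 0 ω} = ENNReal.ofReal (u ^ (-α)))
    (n : ℕ) (t u : ℝ) (hu : 1 ≤ u) :
    P {ω | t ≤ ∑ i ∈ Finset.range n, τ i ω}
      ≤ ENNReal.ofReal ((n : ℝ) * u ^ (-α))
        + ENNReal.ofReal (Real.exp (-(t / u)
            + (Real.exp 1 - 1) * ((n : ℝ) * (1 + ∫ x in (1:ℝ)..u, x ^ (-α)) / u))) := by
  have hu0 : 0 < u := lt_of_lt_of_le one_pos hu
  set s : ℝ := 1 / u with hs_def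
  have hs0 : 0 ≤ s := by positivity
  set Y : ℕ → Ω → ℝ := fun i ω => min (τ i ω) u with hY_def
  have hYmeas : ∀ i, Measurable (Y i) := fun i => (hmeas i).min measurable_const
  have htaili : ∀ i, ∀ w : ℝ, 1 ≤ w → P {ω | w ≤ τ i ω} = ENNReal.ofReal (w ^ (-α)) := by
    intro i w hw
    have h := (hident i).measure_mem_eq (measurableSet_Ici (a := w))
    rw [show τ i ⁻¹' Set.Ici w = {ω | w ≤ τ i ω} from rfl,
      show τ 0 ⁻¹' Set.Ici w = {ω | w ≤ τ 0 ω} from rfl] at h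
    rw [h, htail w hw]
  have hae : ∀ i, ∀ᵐ ω ∂P, 1 ≤ τ i ω := by
    intro i
    have h1 : P {ω | 1 ≤ τ i ω} = 1 := by
      rw [htaili i 1 le_rfl]; simp
    have hms : MeasurableSet {ω | 1 ≤ τ i ω} := measurableSet_le measurable_const (hmeas i)
    rw [ae_iff]
    rw [show {ω | ¬ 1 ≤ τ i ω} = {ω | 1 ≤ τ i ω}ᶜ from rfl, prob_compl_eq_zero_iff hms]
    exact h1
  have hsub : {ω | t ≤ ∑ i ∈ Finset.range n, τ i ω}
      ⊆ (⋃ i ∈ Finset.range n, {ω | u ≤ τ i ω})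
        ∪ {ω | t ≤ ∑ i ∈ Finset.range n, Y i ω} := by
    intro ω hω
    by_cases h : ∃ i ∈ Finset.range n, u ≤ τ i ω
    · obtain ⟨i, hi, hui⟩ := h
      exact Or.inl (Set.mem_biUnion hi hui)
    · push_neg at h
      refine Or.inr ?_
      have heq : ∑ i ∈ Finset.range n, Y i ω = ∑ i ∈ Finset.range n, τ i ω :=
        Finset.sum_congr rfl (fun i hi => min_eq_left (le_of_lt (h i hi)))
      simpa [Set.mem_setOf_eq, heq] using hω
  refine (measure_mono hsub).trans ((measure_union_le _ _).trans (add_le_add ?_ ?_))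
  · refine (measure_biUnion_finset_le _ _).trans ?_
    rw [Finset.sum_congr rfl (fun i _ => htaili i u hu), Finset.sum_const, Finset.card_range,
      nsmul_eq_mul, ← ENNReal.ofReal_natCast n, ← ENNReal.ofReal_mul (Nat.cast_nonneg n)]
  · -- Chernoff part
    set X : Ω → ℝ := fun ω => ∑ i ∈ Finset.range n, Y i ω with hX_def
    set I : ℝ := ∫ x in (1:ℝ)..u, x ^ (-α) with hI_def
    have hXmeas : Measurable X := Finset.measurable_sum _ (fun i _ => hYmeas i)
    have hint : ∀ i, Integrable (fun ω => Real.exp (s * Y i ω)) P := by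
      intro i
      refine (integrable_const (Real.exp 1)).mono'
        (((hYmeas i).const_mul s).exp).aestronglyMeasurable (ae_of_all _ fun ω => ?_)
      rw [Real.norm_eq_abs, Real.abs_exp]
      refine Real.exp_le_exp.2 ?_
      calc s * Y i ω ≤ s * u := mul_le_mul_of_nonneg_left (min_le_right _ _) hs0
        _ = 1 := by rw [hs_def]; field_simp
    have hintX : Integrable (fun ω => Real.exp (s * X ω)) P := by
      refine (integrable_const (Real.exp (n : ℝ))).mono'
        ((hXmeas.const_mul s).exp).aestronglyMeasurable (ae_of_all _ fun ω => ?_)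
      rw [Real.norm_eq_abs, Real.abs_exp]
      refine Real.exp_le_exp.2 ?_
      have hXle : X ω ≤ (n:ℝ) * u := by
        rw [hX_def]
        calc ∑ i ∈ Finset.range n, Y i ω ≤ ∑ _i ∈ Finset.range n, u :=
              Finset.sum_le_sum (fun i _ => min_le_right _ _)
          _ = (n:ℝ) * u := by rw [Finset.sum_const, Finset.card_range, nsmul_eq_mul]
      calc s * X ω ≤ s * ((n:ℝ) * u) := mul_le_mul_of_nonneg_left hXle hs0
        _ = (n:ℝ) := by rw [hs_def]; field_simp
    have hY0int : Integrable (Y 0) P := by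
      refine (integrable_const u).mono' ((hYmeas 0).aestronglyMeasurable) ?_
      filter_upwards [hae 0] with ω hω
      rw [Real.norm_eq_abs, abs_of_nonneg (le_trans zero_le_one (le_min hω hu))]
      exact min_le_right _ _
    set E : ℝ := ∫ ω, Y 0 ω ∂P with hE_def
    have hE_le : E ≤ 1 + I := by
      have hbdd : ∀ᵐ ω ∂P, Y 0 ω ≤ u := ae_of_all _ (fun ω => min_le_right _ _)
      have hnn : 0 ≤ᵐ[P] Y 0 := by
        filter_upwards [hae 0] with ω hω
        exact le_trans zero_le_one (le_min hω hu)
      have hlayer := hY0int.integral_eq_integral_Ioc_meas_le hnn hbdd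
      set g : ℝ → ℝ := fun r => (P {a | r ≤ Y 0 a}).toReal with hg_def
      set F : ℝ → ℝ := fun r => if r ≤ 1 then 1 else (r ^ α)⁻¹ with hF_def
      have hg_anti : Antitone g := fun r1 r2 h12 =>
        ENNReal.toReal_mono (measure_ne_top _ _)
          (measure_mono (fun a ha => le_trans h12 ha))
      have hg0 : ∀ r, 0 ≤ g r := fun r => ENNReal.toReal_nonneg
      have hg1 : ∀ r, g r ≤ 1 := by
        intro r
        have h := ENNReal.toReal_mono ENNReal.one_ne_top
          (prob_le_one (μ := P) (s := {a | r ≤ Y 0 a}))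
        simpa using h
      have hgint : IntegrableOn g (Set.Ioc 0 u) := by
        refine Integrable.mono' (integrable_const 1) hg_anti.measurable.aestronglyMeasurable
          (ae_of_all _ fun r => ?_)
        rw [Real.norm_eq_abs, abs_of_nonneg (hg0 r)]; exact hg1 r
      have hF_meas : Measurable F :=
        Measurable.ite measurableSet_Iic measurable_const
          (Real.continuous_rpow_const hα.le).measurable.inv
      have hFint : IntegrableOn F (Set.Ioc 0 u) := by
        refine Integrable.mono' (integrable_const 1) hF_meas.aestronglyMeasurable ?_
        filter_upwards [ae_restrict_mem measurableSet_Ioc] with r hr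
        simp only [hF_def, Real.norm_eq_abs]
        split_ifs with h1
        · simp
        · push_neg at h1
          rw [abs_of_nonneg (inv_nonneg.2 (Real.rpow_nonneg (by linarith) _))]
          exact inv_le_one_of_one_le₀ (Real.one_le_rpow h1.le hα.le)
      have hmono : ∀ r ∈ Set.Ioc (0:ℝ) u, g r ≤ F r := by
        intro r hr
        by_cases h1 : r ≤ 1
        · simp only [hF_def, if_pos h1]; exact hg1 r
        · push_neg at h1
          simp only [hF_def, if_neg (not_le.2 h1)]
          have hsubset : {a | r ≤ Y 0 a} ⊆ {a | r ≤ τ 0 a} := by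
            intro a ha
            have ha' : r ≤ min (τ 0 a) u := ha
            exact le_trans ha' (min_le_left _ _)
          have hmle := measure_mono (μ := P) hsubset
          rw [htail r h1.le] at hmle
          have heq : (r:ℝ) ^ (-α) = (r ^ α)⁻¹ := Real.rpow_neg (by linarith) α
          rw [← heq]
          calc g r ≤ (ENNReal.ofReal (r ^ (-α))).toReal :=
                ENNReal.toReal_mono ENNReal.ofReal_ne_top hmle
            _ = r ^ (-α) := ENNReal.toReal_ofReal (Real.rpow_nonneg (by linarith) _)
      have hsplit : ∫ r in Set.Ioc (0:ℝ) u, F r = 1 + I := by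
        have hunion : Set.Ioc (0:ℝ) 1 ∪ Set.Ioc 1 u = Set.Ioc 0 u :=
          Set.Ioc_union_Ioc_eq_Ioc zero_le_one hu
        have h1eq : Set.EqOn F (fun _ => (1:ℝ)) (Set.Ioc 0 1) := fun r hr => if_pos hr.2
        have h2eq : Set.EqOn F (fun r => r ^ (-α)) (Set.Ioc 1 u) := by
          intro r hr
          simp only [hF_def, if_neg (not_le.2 hr.1)]
          exact (Real.rpow_neg (by linarith [hr.1] : (0:ℝ) ≤ r) α).symm
        rw [← hunion, setIntegral_union (Set.Ioc_disjoint_Ioc_of_le le_rfl) measurableSet_Ioc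
          (hFint.mono_set (by rw [← hunion]; exact Set.subset_union_left))
          (hFint.mono_set (by rw [← hunion]; exact Set.subset_union_right)),
          setIntegral_congr_fun measurableSet_Ioc h1eq,
          setIntegral_congr_fun measurableSet_Ioc h2eq,
          hI_def, intervalIntegral.integral_of_le hu, setIntegral_const]
        simp [Real.volume_Ioc]
      calc E = ∫ r in Set.Ioc (0:ℝ) u, g r := hlayer
        _ ≤ ∫ r in Set.Ioc (0:ℝ) u, F r :=
            setIntegral_mono_on hgint hFint measurableSet_Ioc hmono
        _ = 1 + I := hsplit
    have hmgf_eq : mgf X P s = (mgf (Y 0) P s) ^ n := by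
      have hXsum : X = ∑ i ∈ Finset.range n, Y i := by
        funext ω; rw [hX_def]; simp
      have hindY : iIndepFun Y P :=
        hindep.comp (fun _ x => min x u) (fun _ => measurable_id.min measurable_const)
      rw [hXsum, iIndepFun.mgf_sum hindY hYmeas]
      have hsame : ∀ i ∈ Finset.range n, mgf (Y i) P s = mgf (Y 0) P s := by
        intro i _
        have hid : IdentDistrib (Y i) (Y 0) P P :=
          (hident i).comp (measurable_id.min measurable_const)
        have hid2 : IdentDistrib (fun ω => Real.exp (s * Y i ω))
            (fun ω => Real.exp (s * Y 0 ω)) P P :=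
          hid.comp ((measurable_const.mul measurable_id).exp)
        exact hid2.integral_eq
      rw [Finset.prod_congr rfl hsame, Finset.prod_const, Finset.card_range]
    have hmgf0 : mgf (Y 0) P s ≤ Real.exp ((Real.exp 1 - 1) * (s * E)) := by
      have hrhs_int : Integrable (fun ω => 1 + (Real.exp 1 - 1) * (s * Y 0 ω)) P :=
        (integrable_const (1:ℝ)).add (((hY0int.const_mul s).const_mul (Real.exp 1 - 1)))
      have h1 : mgf (Y 0) P s ≤ 1 + (Real.exp 1 - 1) * (s * E) := by
        have hb : ∀ᵐ ω ∂P, Real.exp (s * Y 0 ω) ≤ 1 + (Real.exp 1 - 1) * (s * Y 0 ω) := by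
          filter_upwards [hae 0] with ω hω
          have h0 : 0 ≤ s * Y 0 ω := mul_nonneg hs0 (le_trans zero_le_one (le_min hω hu))
          have h1' : s * Y 0 ω ≤ 1 := by
            calc s * Y 0 ω ≤ s * u := mul_le_mul_of_nonneg_left (min_le_right _ _) hs0
              _ = 1 := by rw [hs_def]; field_simp
          exact exp_le_one_add_aux h0 h1'
        have hmono := integral_mono_ae (hint 0) hrhs_int hb
        rw [integral_add (integrable_const _) ((hY0int.const_mul s).const_mul _),
          integral_const, integral_const_mul, integral_const_mul] at hmono
        simpa [mgf, hE_def] using hmono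
      refine h1.trans ?_
      linarith [Real.add_one_le_exp ((Real.exp 1 - 1) * (s * E))]
    have he1 : (0:ℝ) ≤ Real.exp 1 - 1 := by
      linarith [Real.add_one_le_exp (1:ℝ)]
    have hfinal : Real.exp (-s * t) * mgf X P s
        ≤ Real.exp (-(t / u) + (Real.exp 1 - 1) * ((n:ℝ) * (1 + I) / u)) := by
      rw [hmgf_eq]
      have h2 : (mgf (Y 0) P s) ^ n ≤ (Real.exp ((Real.exp 1 - 1) * (s * E))) ^ n :=
        pow_le_pow_left₀ mgf_nonneg hmgf0 n
      calc Real.exp (-s * t) * (mgf (Y 0) P s) ^ n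
          ≤ Real.exp (-s * t) * (Real.exp ((Real.exp 1 - 1) * (s * E))) ^ n :=
            mul_le_mul_of_nonneg_left h2 (Real.exp_pos _).le
        _ = Real.exp (-s * t + (n:ℝ) * ((Real.exp 1 - 1) * (s * E))) := by
            rw [← Real.exp_nat_mul, ← Real.exp_add]
        _ ≤ Real.exp (-(t / u) + (Real.exp 1 - 1) * ((n:ℝ) * (1 + I) / u)) := by
            apply Real.exp_le_exp.2
            have hst : -s * t = -(t / u) := by rw [hs_def]; ring
            have hnn : (0:ℝ) ≤ (n:ℝ) := Nat.cast_nonneg n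
            have hle : (n:ℝ) * ((Real.exp 1 - 1) * (s * E))
                ≤ (Real.exp 1 - 1) * ((n:ℝ) * (1 + I) / u) := by
              have hEI : (n:ℝ) * E * s ≤ (n:ℝ) * (1 + I) * s := by
                have : (n:ℝ) * E ≤ (n:ℝ) * (1 + I) := mul_le_mul_of_nonneg_left hE_le hnn
                exact mul_le_mul_of_nonneg_right this hs0
              calc (n:ℝ) * ((Real.exp 1 - 1) * (s * E))
                  = (Real.exp 1 - 1) * ((n:ℝ) * E * s) := by ring
                _ ≤ (Real.exp 1 - 1) * ((n:ℝ) * (1 + I) * s) :=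
                    mul_le_mul_of_nonneg_left hEI he1
                _ = (Real.exp 1 - 1) * ((n:ℝ) * (1 + I) / u) := by
                    rw [hs_def]; ring
            linarith
    have hPB := measure_ge_le_exp_mul_mgf (μ := P) (X := X) t hs0 hintX
    have hset : {ω | t ≤ ∑ i ∈ Finset.range n, Y i ω} = {ω | t ≤ X ω} := rfl
    rw [hset, ← ENNReal.ofReal_toReal (measure_ne_top P {ω | t ≤ X ω})]
    exact ENNReal.ofReal_le_ofReal (hPB.trans hfinal)

private lemma assemble
    {Ω : Type*} [MeasurableSpace Ω] (P : Measure Ω) [IsProbabilityMeasure P]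
    (α : ℝ) (hα : 0 < α)
    (τ : ℕ → Ω → ℝ) (hmeas : ∀ i, Measurable (τ i))
    (hindep : iIndepFun τ P)
    (hident : ∀ i, IdentDistrib (τ i) (τ 0) P P)
    (htail : ∀ u : ℝ, 1 ≤ u → P {ω | u ≤ τ 0 ω} = ENNReal.ofReal (u ^ (-α)))
    (ρ : ℝ) (hρ0 : 0 < ρ) (hρα : ρ < α)
    (B : ℝ)
    (hmain : ∀ (n : ℕ), 1 ≤ n → ∀ lam L v w : ℝ,
      L = Real.log lam → 1 ≤ L → 1 ≤ lam → v = vAlpha α n →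
      w = lam * v / (2 * ρ * L) → 1 ≤ w → 2 * ρ * L ≤ lam → L ^ 2 ≤ 4 * lam →
      (n:ℝ) * w ^ (-α) ≤ (2 * ρ * L) ^ α * lam ^ (-α) →
      (n:ℝ) * (1 + ∫ x in (1:ℝ)..w, x ^ (-α)) / w ≤ B) :
    ∃ C : ℝ, ∀ n : ℕ, 1 ≤ n → ∀ lam : ℝ, 1 ≤ lam →
      P {ω | lam * vAlpha α n ≤ ∑ i ∈ Finset.range n, τ i ω}
        ≤ ENNReal.ofReal (C * lam ^ (-ρ)) := by
  have he2 : (2:ℝ) ≤ Real.exp 1 := by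
    have := Real.add_one_le_exp (1:ℝ); linarith
  have he1 : (0:ℝ) ≤ Real.exp 1 - 1 := by linarith
  set lam0 : ℝ := max (Real.exp 1) (16 * ρ ^ 2) with hlam0_def
  have hlam0_e : Real.exp 1 ≤ lam0 := le_max_left _ _
  have hlam0_1 : (1:ℝ) ≤ lam0 := by linarith
  have hlam0_pos : (0:ℝ) < lam0 := by linarith
  set ε : ℝ := (α - ρ) / α with hε_def
  have hε : 0 < ε := div_pos (by linarith) hα
  have hεα : ε * α = α - ρ := by rw [hε_def]; field_simp
  set A1 : ℝ := (2 * ρ / ε) ^ α with hA1_def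
  have hA1_nonneg : 0 ≤ A1 := Real.rpow_nonneg (by positivity) _
  set D : ℝ := A1 + Real.exp ((Real.exp 1 - 1) * B) with hD_def
  refine ⟨max D (lam0 ^ ρ), ?_⟩
  intro n hn lam hlam
  have hlam_pos : (0:ℝ) < lam := by linarith
  by_cases hcase : lam0 ≤ lam
  · -- main case
    have hlam_e : Real.exp 1 ≤ lam := le_trans hlam0_e hcase
    have hlam1 : (1:ℝ) ≤ lam := le_trans hlam0_1 hcase
    set L : ℝ := Real.log lam with hL_def
    have hL1 : (1:ℝ) ≤ L := by
      rw [hL_def, ← Real.log_exp 1]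
      exact Real.log_le_log (Real.exp_pos 1) hlam_e
    have hsq := Real.sq_sqrt hlam_pos.le
    have hsqnn := Real.sqrt_nonneg lam
    have hL2 : L ≤ 2 * Real.sqrt lam := by
      have h := Real.log_le_rpow_div hlam_pos.le (by norm_num : (0:ℝ) < 1/2)
      rw [← Real.sqrt_eq_rpow] at h
      rw [hL_def]; linarith
    have hLsq : L ^ 2 ≤ 4 * lam := by nlinarith
    have h16 : 16 * ρ ^ 2 ≤ lam := le_trans (le_max_right _ _) hcase
    have h4ρ : 4 * ρ ≤ Real.sqrt lam := by nlinarith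
    have hKpos : (0:ℝ) < 2 * ρ * L := by nlinarith
    have hKlam : 2 * ρ * L ≤ lam := by nlinarith
    set v : ℝ := vAlpha α n with hv_def
    have hv1 : (1:ℝ) ≤ v := vAlpha_one_le α hα n hn
    have hvpos : (0:ℝ) < v := by linarith
    have hnv : (n:ℝ) ≤ v ^ α := le_vAlpha_rpow α hα n hn
    have hlv : (0:ℝ) < lam * v := mul_pos hlam_pos hvpos
    set w : ℝ := lam * v / (2 * ρ * L) with hw_def
    have hw_pos : 0 < w := div_pos hlv hKpos
    have hw1 : (1:ℝ) ≤ w := by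
      rw [hw_def, le_div_iff₀ hKpos, one_mul]
      calc 2 * ρ * L ≤ lam := hKlam
        _ ≤ lam * v := le_mul_of_one_le_right hlam_pos.le hv1
    have haux : (n:ℝ) * w ^ (-α) ≤ (2 * ρ * L) ^ α * lam ^ (-α) := by
      have hwe : w = (lam * v) * (2 * ρ * L)⁻¹ := by rw [hw_def, div_eq_mul_inv]
      have h1 : w ^ (-α) = lam ^ (-α) * v ^ (-α) * (2 * ρ * L) ^ α := by
        rw [hwe, Real.mul_rpow hlv.le (inv_nonneg.2 hKpos.le),
          Real.mul_rpow hlam_pos.le hvpos.le, Real.inv_rpow hKpos.le,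
          Real.rpow_neg hKpos.le, inv_inv]
      have h2 : (n:ℝ) * v ^ (-α) ≤ 1 := by
        have hvα : (0:ℝ) < v ^ α := Real.rpow_pos_of_pos hvpos α
        rw [Real.rpow_neg hvpos.le]
        calc (n:ℝ) * (v ^ α)⁻¹ ≤ v ^ α * (v ^ α)⁻¹ :=
              mul_le_mul_of_nonneg_right hnv (inv_nonneg.2 hvα.le)
          _ = 1 := mul_inv_cancel₀ hvα.ne'
      calc (n:ℝ) * w ^ (-α) = ((n:ℝ) * v ^ (-α)) * ((2 * ρ * L) ^ α * lam ^ (-α)) := by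
            rw [h1]; ring
        _ ≤ 1 * ((2 * ρ * L) ^ α * lam ^ (-α)) :=
            mul_le_mul_of_nonneg_right h2 (by positivity)
        _ = (2 * ρ * L) ^ α * lam ^ (-α) := one_mul _
    have hIbound := hmain n hn lam L v w hL_def hL1 hlam1 hv_def hw_def hw1 hKlam hLsq haux
    have hcore := core_bound P α hα τ hmeas hindep hident htail n (lam * v) w hw1
    refine hcore.trans ?_
    rw [← ENNReal.ofReal_add (by positivity) (Real.exp_pos _).le]
    apply ENNReal.ofReal_le_ofReal
    have hKA : (2 * ρ * L) ^ α * lam ^ (-α) ≤ A1 * lam ^ (-ρ) := by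
      have hLle : L ≤ lam ^ ε / ε := by
        rw [hL_def]; exact Real.log_le_rpow_div hlam_pos.le hε
      have h2K : 2 * ρ * L ≤ (2 * ρ / ε) * lam ^ ε := by
        have := mul_le_mul_of_nonneg_left hLle (by positivity : (0:ℝ) ≤ 2 * ρ)
        calc 2 * ρ * L ≤ 2 * ρ * (lam ^ ε / ε) := this
          _ = (2 * ρ / ε) * lam ^ ε := by ring
      have h3 : (2 * ρ * L) ^ α ≤ A1 * lam ^ (α - ρ) := by
        calc (2 * ρ * L) ^ α ≤ ((2 * ρ / ε) * lam ^ ε) ^ α :=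
              Real.rpow_le_rpow hKpos.le h2K hα.le
          _ = A1 * (lam ^ ε) ^ α := Real.mul_rpow (by positivity) (Real.rpow_nonneg hlam_pos.le _)
          _ = A1 * lam ^ (ε * α) := by rw [← Real.rpow_mul hlam_pos.le]
          _ = A1 * lam ^ (α - ρ) := by rw [hεα]
      calc (2 * ρ * L) ^ α * lam ^ (-α) ≤ (A1 * lam ^ (α - ρ)) * lam ^ (-α) :=
            mul_le_mul_of_nonneg_right h3 (Real.rpow_nonneg hlam_pos.le _)
        _ = A1 * lam ^ (-ρ) := by
            rw [mul_assoc, ← Real.rpow_add hlam_pos]; ring_nf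
    -- part (b): exponential term
    have htu : lam * v / w = 2 * ρ * L := by
      rw [hw_def]; field_simp
    have hexp : Real.exp (-(lam * v / w)
        + (Real.exp 1 - 1) * ((n:ℝ) * (1 + ∫ x in (1:ℝ)..w, x ^ (-α)) / w))
        ≤ Real.exp ((Real.exp 1 - 1) * B) * lam ^ (-ρ) := by
      have harg : -(lam * v / w)
          + (Real.exp 1 - 1) * ((n:ℝ) * (1 + ∫ x in (1:ℝ)..w, x ^ (-α)) / w)
          ≤ -(2 * ρ * L) + (Real.exp 1 - 1) * B := by
        rw [htu]
        have := mul_le_mul_of_nonneg_left hIbound he1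
        linarith
      calc Real.exp (-(lam * v / w)
            + (Real.exp 1 - 1) * ((n:ℝ) * (1 + ∫ x in (1:ℝ)..w, x ^ (-α)) / w))
          ≤ Real.exp (-(2 * ρ * L) + (Real.exp 1 - 1) * B) := Real.exp_le_exp.2 harg
        _ = Real.exp ((Real.exp 1 - 1) * B) * Real.exp (-(2 * ρ * L)) := by
            rw [← Real.exp_add]; ring_nf
        _ = Real.exp ((Real.exp 1 - 1) * B) * lam ^ (-(2 * ρ)) := by
            rw [Real.rpow_def_of_pos hlam_pos, hL_def]; ring_nf
        _ ≤ Real.exp ((Real.exp 1 - 1) * B) * lam ^ (-ρ) := by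
            refine mul_le_mul_of_nonneg_left ?_ (Real.exp_pos _).le
            exact Real.rpow_le_rpow_of_exponent_le hlam1 (by linarith)
    calc (n:ℝ) * w ^ (-α) + Real.exp (-(lam * v / w)
          + (Real.exp 1 - 1) * ((n:ℝ) * (1 + ∫ x in (1:ℝ)..w, x ^ (-α)) / w))
        ≤ A1 * lam ^ (-ρ) + Real.exp ((Real.exp 1 - 1) * B) * lam ^ (-ρ) :=
          add_le_add (haux.trans hKA) hexp
      _ = D * lam ^ (-ρ) := by rw [hD_def]; ring
      _ ≤ max D (lam0 ^ ρ) * lam ^ (-ρ) :=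
          mul_le_mul_of_nonneg_right (le_max_left _ _) (Real.rpow_nonneg hlam_pos.le _)
  · -- trivial case lam < lam0
    push_neg at hcase
    refine le_trans prob_le_one ?_
    rw [← ENNReal.ofReal_one]
    apply ENNReal.ofReal_le_ofReal
    have h2 : lam0 ^ (-ρ) ≤ lam ^ (-ρ) :=
      Real.rpow_le_rpow_of_nonpos hlam_pos hcase.le (by linarith)
    have h3 : (0:ℝ) ≤ lam0 ^ ρ := Real.rpow_nonneg hlam0_pos.le _
    calc (1:ℝ) = lam0 ^ ρ * lam0 ^ (-ρ) := by
          rw [← Real.rpow_add hlam0_pos]; simp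
      _ ≤ max D (lam0 ^ ρ) * lam ^ (-ρ) :=
          mul_le_mul (le_max_right _ _) h2 (Real.rpow_nonneg hlam0_pos.le _)
            (le_trans h3 (le_max_right _ _))

private lemma case_lt (α ρ : ℝ) (hα : 0 < α) (hα1 : α < 1) (hρ0 : 0 < ρ) :
    ∃ B : ℝ, ∀ (n : ℕ), 1 ≤ n → ∀ lam L v w : ℝ,
      L = Real.log lam → 1 ≤ L → 1 ≤ lam → v = vAlpha α n →
      w = lam * v / (2 * ρ * L) → 1 ≤ w → 2 * ρ * L ≤ lam → L ^ 2 ≤ 4 * lam →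
      (n:ℝ) * w ^ (-α) ≤ (2 * ρ * L) ^ α * lam ^ (-α) →
      (n:ℝ) * (1 + ∫ x in (1:ℝ)..w, x ^ (-α)) / w ≤ B := by
  refine ⟨1 + 1 / (1 - α), ?_⟩
  intro n hn lam L v w hL hL1 hlam1 hv hw hw1 hKlam hLsq haux
  have h1α : (0:ℝ) < 1 - α := by linarith
  have hw0 : (0:ℝ) < w := by linarith
  have hlam_pos : (0:ℝ) < lam := by linarith
  have hKpos : (0:ℝ) < 2 * ρ * L := by nlinarith
  have hn0 : (0:ℝ) ≤ (n:ℝ) := Nat.cast_nonneg n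
  -- the integral
  have hnotmem : (0:ℝ) ∉ Set.uIcc 1 w := by
    rw [Set.uIcc_of_le hw1]
    intro hmem
    exact absurd hmem.1 (by norm_num)
  have hI : (∫ x in (1:ℝ)..w, x ^ (-α)) = (w ^ (-α + 1) - 1) / (-α + 1) := by
    rw [integral_rpow (Or.inr ⟨(by simp only [ne_eq, neg_inj]; exact ne_of_lt hα1 : -α ≠ -1), hnotmem⟩)]
    rw [Real.one_rpow]
  -- bound n * w^(-α) ≤ 1
  have hKα : (2 * ρ * L) ^ α * lam ^ (-α) ≤ 1 := by
    have h5 : (2 * ρ * L) ^ α ≤ lam ^ α := Real.rpow_le_rpow hKpos.le hKlam hα.le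
    have hlamα : (0:ℝ) < lam ^ α := Real.rpow_pos_of_pos hlam_pos α
    rw [Real.rpow_neg hlam_pos.le]
    calc (2 * ρ * L) ^ α * (lam ^ α)⁻¹ ≤ lam ^ α * (lam ^ α)⁻¹ :=
          mul_le_mul_of_nonneg_right h5 (inv_nonneg.2 hlamα.le)
      _ = 1 := mul_inv_cancel₀ hlamα.ne'
  have hnwα : (n:ℝ) * w ^ (-α) ≤ 1 := haux.trans hKα
  -- w^(1-α) facts
  have h1w : (1:ℝ) ≤ w ^ (1 - α) := Real.one_le_rpow hw1 (by linarith)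
  have hsplit : w ^ (1 - α) = w * w ^ (-α) := by
    rw [show (1 - α) = 1 + (-α) by ring, Real.rpow_add hw0, Real.rpow_one]
  have hbound : 1 + (∫ x in (1:ℝ)..w, x ^ (-α)) ≤ (1 + 1/(1-α)) * w ^ (1 - α) := by
    rw [hI, show (-α + 1) = 1 - α by ring]
    have key : (w ^ (1-α) - 1)/(1-α) ≤ w ^ (1-α)/(1-α) :=
      (div_le_div_iff_of_pos_right h1α).2 (by linarith)
    have hWdiv : w ^ (1-α)/(1-α) = w ^ (1-α) * (1/(1-α)) := by rw [mul_one_div]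
    have hexpand : (1 + 1/(1-α)) * w ^ (1-α) = w ^ (1-α) + w ^ (1-α) * (1/(1-α)) := by ring
    linarith
  have hstep : (n:ℝ) * (1 + ∫ x in (1:ℝ)..w, x ^ (-α)) / w
      ≤ (n:ℝ) * ((1 + 1/(1-α)) * w ^ (1 - α)) / w :=
    (div_le_div_iff_of_pos_right hw0).2 (mul_le_mul_of_nonneg_left hbound hn0)
  refine hstep.trans ?_
  have hfrac : (0:ℝ) ≤ 1 + 1/(1-α) := by positivity
  calc (n:ℝ) * ((1 + 1/(1-α)) * w ^ (1 - α)) / w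
      = (1 + 1/(1-α)) * ((n:ℝ) * w ^ (-α)) := by
        rw [hsplit]; field_simp
    _ ≤ (1 + 1/(1-α)) * 1 := mul_le_mul_of_nonneg_left hnwα hfrac
    _ = 1 + 1/(1-α) := mul_one _

private lemma case_gt (α ρ : ℝ) (hα1 : 1 < α) (hρ0 : 0 < ρ) :
    ∃ B : ℝ, ∀ (n : ℕ), 1 ≤ n → ∀ lam L v w : ℝ,
      L = Real.log lam → 1 ≤ L → 1 ≤ lam → v = vAlpha α n →
      w = lam * v / (2 * ρ * L) → 1 ≤ w → 2 * ρ * L ≤ lam → L ^ 2 ≤ 4 * lam →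
      (n:ℝ) * w ^ (-α) ≤ (2 * ρ * L) ^ α * lam ^ (-α) →
      (n:ℝ) * (1 + ∫ x in (1:ℝ)..w, x ^ (-α)) / w ≤ B := by
  refine ⟨1 + 1 / (α - 1), ?_⟩
  intro n hn lam L v w hL hL1 hlam1 hv hw hw1 hKlam hLsq haux
  have hα1' : (0:ℝ) < α - 1 := by linarith
  have hw0 : (0:ℝ) < w := by linarith
  have hlam_pos : (0:ℝ) < lam := by linarith
  have hKpos : (0:ℝ) < 2 * ρ * L := by nlinarith
  have hn0 : (0:ℝ) ≤ (n:ℝ) := Nat.cast_nonneg n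
  have hn1 : (1:ℝ) ≤ (n:ℝ) := by exact_mod_cast hn
  have hvn : v = (n:ℝ) := by
    rw [hv]; unfold vAlpha
    rw [if_neg (by linarith), if_neg (by linarith)]
  have hnotmem : (0:ℝ) ∉ Set.uIcc 1 w := by
    rw [Set.uIcc_of_le hw1]
    intro hmem
    exact absurd hmem.1 (by norm_num)
  have hI : (∫ x in (1:ℝ)..w, x ^ (-α)) = (w ^ (-α + 1) - 1) / (-α + 1) := by
    rw [integral_rpow (Or.inr ⟨(by simp only [ne_eq, neg_inj]; exact ne_of_gt hα1 : -α ≠ -1), hnotmem⟩)]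
    rw [Real.one_rpow]
  have hwexp : (0:ℝ) ≤ w ^ (-α + 1) := Real.rpow_nonneg hw0.le _
  have hI2 : (∫ x in (1:ℝ)..w, x ^ (-α)) = (1 - w ^ (-α + 1)) / (α - 1) := by
    rw [hI]
    have h1 : (-α + 1) ≠ 0 := by linarith
    field_simp
    ring
  have hI_le : (∫ x in (1:ℝ)..w, x ^ (-α)) ≤ 1 / (α - 1) := by
    rw [hI2]
    exact (div_le_div_iff_of_pos_right hα1').2 (by linarith)
  have hnz : (n:ℝ) ≠ 0 := by positivity
  have hnw : (n:ℝ) / w = 2 * ρ * L / lam := by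
    rw [hw, hvn]
    field_simp
  have hnw1 : (n:ℝ) / w ≤ 1 := by
    rw [hnw, div_le_one hlam_pos]; exact hKlam
  have hB0 : (0:ℝ) ≤ 1 + 1 / (α - 1) := by positivity
  calc (n:ℝ) * (1 + ∫ x in (1:ℝ)..w, x ^ (-α)) / w
      ≤ (n:ℝ) * (1 + 1 / (α - 1)) / w :=
        (div_le_div_iff_of_pos_right hw0).2 (mul_le_mul_of_nonneg_left (by linarith) hn0)
    _ = (1 + 1 / (α - 1)) * ((n:ℝ) / w) := by ring
    _ ≤ (1 + 1 / (α - 1)) * 1 := mul_le_mul_of_nonneg_left hnw1 hB0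
    _ = 1 + 1 / (α - 1) := mul_one _

private lemma case_eq (ρ : ℝ) (hρ0 : 0 < ρ) :
    ∃ B : ℝ, ∀ (n : ℕ), 1 ≤ n → ∀ lam L v w : ℝ,
      L = Real.log lam → 1 ≤ L → 1 ≤ lam → v = vAlpha 1 n →
      w = lam * v / (2 * ρ * L) → 1 ≤ w → 2 * ρ * L ≤ lam → L ^ 2 ≤ 4 * lam →
      (n:ℝ) * w ^ (-(1:ℝ)) ≤ (2 * ρ * L) ^ (1:ℝ) * lam ^ (-(1:ℝ)) →
      (n:ℝ) * (1 + ∫ x in (1:ℝ)..w, x ^ (-(1:ℝ))) / w ≤ B := by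
  set c : ℝ := max 0 (-Real.log (2 * ρ)) with hc_def
  have hc0 : (0:ℝ) ≤ c := le_max_left _ _
  refine ⟨3 + c + 8 * ρ, ?_⟩
  intro n hn lam L v w hL hL1 hlam1 hv hw hw1 hKlam hLsq haux
  have hw0 : (0:ℝ) < w := by linarith
  have hlam_pos : (0:ℝ) < lam := by linarith
  have hKpos : (0:ℝ) < 2 * ρ * L := by nlinarith
  have hn0 : (0:ℝ) ≤ (n:ℝ) := Nat.cast_nonneg n
  have hn1 : (1:ℝ) ≤ (n:ℝ) := by exact_mod_cast hn
  have hnpos : (0:ℝ) < (n:ℝ) := by linarith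
  set M : ℝ := max 1 (Real.log n) with hM_def
  have hM1 : (1:ℝ) ≤ M := le_max_left _ _
  have hM0 : (0:ℝ) < M := by linarith
  have hlogn_M : Real.log n ≤ M := le_max_right _ _
  have hvn : v = (n:ℝ) * M := by
    rw [hv]; unfold vAlpha
    rw [if_neg (lt_irrefl 1), if_pos rfl]
  have hvpos : (0:ℝ) < v := by rw [hvn]; positivity
  -- integral = log w
  have hnotmem : (0:ℝ) ∉ Set.uIcc 1 w := by
    rw [Set.uIcc_of_le hw1]
    intro hmem
    exact absurd hmem.1 (by norm_num)
  have hI : (∫ x in (1:ℝ)..w, x ^ (-(1:ℝ))) = Real.log w := by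
    simp_rw [Real.rpow_neg_one]
    rw [integral_inv hnotmem, div_one]
  -- bound log w
  have hlogw : Real.log w ≤ L + 2 * M + c := by
    have h2ρ : (0:ℝ) < 2 * ρ := by linarith
    have hlogv : Real.log v ≤ 2 * M := by
      rw [hvn, Real.log_mul hnpos.ne' hM0.ne']
      have h1 : Real.log M ≤ M - 1 := Real.log_le_sub_one_of_pos hM0
      linarith
    have hlogL : (0:ℝ) ≤ Real.log L := Real.log_nonneg hL1
    have hw' : Real.log w = Real.log lam + Real.log v - (Real.log (2*ρ) + Real.log L) := by
      rw [hw, Real.log_div (by positivity) hKpos.ne',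
        Real.log_mul hlam_pos.ne' hvpos.ne',
        show (2:ℝ) * ρ * L = (2*ρ) * L by ring,
        Real.log_mul h2ρ.ne' (by linarith : L ≠ 0)]
    have hcge : -Real.log (2*ρ) ≤ c := le_max_right _ _
    rw [hw', ← hL]
    linarith
  -- n / w
  have hnz : (n:ℝ) ≠ 0 := hnpos.ne'
  have hnw : (n:ℝ) / w = 2 * ρ * L / (lam * M) := by
    rw [hw, hvn]
    field_simp
  have hexpr : (n:ℝ) * (1 + ∫ x in (1:ℝ)..w, x ^ (-(1:ℝ))) / w
      = (1 + Real.log w) * ((n:ℝ) / w) := by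
    rw [hI]; ring
  rw [hexpr, hnw]
  rw [show (1 + Real.log w) * (2 * ρ * L / (lam * M))
      = ((1 + Real.log w) * (2 * ρ * L)) / (lam * M) by ring]
  rw [div_le_iff₀ (by positivity)]
  -- final nonlinear arithmetic
  have hlogw0 : (0:ℝ) ≤ Real.log w := Real.log_nonneg hw1
  have e1 : (2 * ρ * L) * M ≤ lam * M := mul_le_mul_of_nonneg_right hKlam (by linarith)
  have e2 : 2 * ρ * L ^ 2 ≤ 8 * ρ * lam := by nlinarith
  have e3 : (2 * ρ * L) * (1 + c) ≤ lam * (1 + c) := mul_le_mul_of_nonneg_right hKlam (by linarith)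
  have e4 : lam * (1 + c) ≤ lam * (1 + c) * M := le_mul_of_one_le_right (by positivity) hM1
  have e5 : 8 * ρ * lam ≤ 8 * ρ * lam * M := le_mul_of_one_le_right (by positivity) hM1
  have e6 : (1 + Real.log w) * (2 * ρ * L) ≤ (1 + c + L + 2 * M) * (2 * ρ * L) :=
    mul_le_mul_of_nonneg_right (by linarith) hKpos.le
  nlinarith [e1, e2, e3, e4, e5, e6]

theorem upper_tail_bound_iid_sum
    {Ω : Type*} [MeasurableSpace Ω] (P : Measure Ω) [IsProbabilityMeasure P]
    (α : ℝ) (hα : 0 < α)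
    (τ : ℕ → Ω → ℝ) (hmeas : ∀ i, Measurable (τ i))
    (hindep : iIndepFun τ P)
    (hident : ∀ i, IdentDistrib (τ i) (τ 0) P P)
    (htail : ∀ u : ℝ, 1 ≤ u → P {ω | u ≤ τ 0 ω} = ENNReal.ofReal (u ^ (-α))) :
    ∀ ρ : ℝ, 0 < ρ → ρ < α →
      ∃ C : ℝ, ∀ n : ℕ, 1 ≤ n → ∀ lam : ℝ, 1 ≤ lam →
        P {ω | lam * vAlpha α n ≤ ∑ i ∈ Finset.range n, τ i ω}
          ≤ ENNReal.ofReal (C * lam ^ (-ρ)) := by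
  intro ρ hρ0 hρα
  rcases lt_trichotomy α 1 with h1 | h1 | h1
  · obtain ⟨B, hB⟩ := case_lt α ρ hα h1 hρ0
    exact assemble P α hα τ hmeas hindep hident htail ρ hρ0 hρα B hB
  · subst h1
    obtain ⟨B, hB⟩ := case_eq ρ hρ0
    exact assemble P 1 one_pos τ hmeas hindep hident htail ρ hρ0 hρα B hB
  · obtain ⟨B, hB⟩ := case_gt α ρ h1 hρ0
    exact assemble P α hα τ hmeas hindep hident htail ρ hρ0 hρα B hB
end

section
/- There exists a constant c > 0 such that for all θ ∈ (0,1): E[exp(−θ τ_1)] ≤ 1 − c θ^α if α < 1; E[exp(−θ τ_1)] ≤ 1 − c θ log(1/θ) if α = 1; and E[exp(−θ τ_1)] ≤ 1 − c θ if α > 1. -/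
open MeasureTheory ProbabilityTheory Filter

lemma chord_aux (y : ℝ) (h0 : 0 ≤ y) (h1 : y ≤ 1) : Real.exp (-y) ≤ 1 - y/2 := by
  have h := Real.add_one_le_exp y
  have hp := Real.exp_pos (-y)
  have key : Real.exp (-y) * (1 + y) ≤ 1 := by
    calc Real.exp (-y) * (1 + y) ≤ Real.exp (-y) * Real.exp y := by
          apply mul_le_mul_of_nonneg_left (by linarith) hp.le
      _ = 1 := by rw [← Real.exp_add]; simp
  nlinarith [sq_nonneg y]

lemma dyadic_sum_le_pow (x : ℝ) (n : ℕ) :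
    (∑ k ∈ Finset.range n, if (2:ℝ)^(k+1) ≤ x then (2:ℝ)^k else 0) ≤ 2^n - 1 := by
  calc (∑ k ∈ Finset.range n, if (2:ℝ)^(k+1) ≤ x then (2:ℝ)^k else 0)
      ≤ ∑ k ∈ Finset.range n, (2:ℝ)^k := by
        apply Finset.sum_le_sum; intro k _
        split <;> simp [pow_nonneg]
    _ = 2^n - 1 := by
        rw [geom_sum_eq (by norm_num)]; ring

lemma dyadic_sum_le (x : ℝ) (hx : 0 ≤ x) (n : ℕ) :
    (∑ k ∈ Finset.range n, if (2:ℝ)^(k+1) ≤ x then (2:ℝ)^k else 0) ≤ x := by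
  induction n with
  | zero => simpa
  | succ n ih =>
    rw [Finset.sum_range_succ]
    by_cases h : (2:ℝ)^(n+1) ≤ x
    · have := dyadic_sum_le_pow x n
      rw [if_pos h]
      calc _ ≤ ((2:ℝ)^n - 1) + 2^n := by linarith
        _ ≤ x := by rw [pow_succ] at h; linarith
    · rw [if_neg h]; simpa using ih

theorem laplace_transform_upper_bound
    {Ω : Type*} [MeasurableSpace Ω] (P : Measure Ω) [IsProbabilityMeasure P]
    (α : ℝ) (hα : 0 < α)
    (τ : Ω → ℝ) (hmeas : Measurable τ)
    (htail : ∀ u : ℝ, 1 ≤ u → P {ω | u ≤ τ ω} = ENNReal.ofReal (u ^ (-α))) :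
    ∃ c : ℝ, 0 < c ∧ ∀ θ : ℝ, 0 < θ → θ < 1 →
      (α < 1 → (∫ ω, Real.exp (-(θ * τ ω)) ∂P) ≤ 1 - c * θ ^ α) ∧
      (α = 1 → (∫ ω, Real.exp (-(θ * τ ω)) ∂P) ≤ 1 - c * θ * Real.log (1 / θ)) ∧
      (1 < α → (∫ ω, Real.exp (-(θ * τ ω)) ∂P) ≤ 1 - c * θ) := by
  have hms : MeasurableSet {ω | (1:ℝ) ≤ τ ω} := measurableSet_le measurable_const hmeas
  have hτ1 : ∀ᵐ ω ∂P, 1 ≤ τ ω := by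
    have h := htail 1 le_rfl
    rw [Real.one_rpow] at h
    have h1 : P {ω | (1:ℝ) ≤ τ ω} = 1 := by rw [h]; simp
    have hc : P {ω | (1:ℝ) ≤ τ ω}ᶜ = 0 := (prob_compl_eq_zero_iff hms).mpr h1
    rw [ae_iff]
    exact hc
  refine ⟨1/10, by norm_num, ?_⟩
  intro θ hθ0 hθ1
  set f : Ω → ℝ := fun ω => Real.exp (-(θ * τ ω)) with hf
  have hf_meas : Measurable f := Real.measurable_exp.comp (measurable_const.mul hmeas).neg
  have hf_int : Integrable f P := by
    apply Integrable.mono' (integrable_const (1:ℝ)) hf_meas.aestronglyMeasurable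
    filter_upwards [hτ1] with ω hω
    rw [Real.norm_eq_abs, abs_of_pos (Real.exp_pos _)]
    calc Real.exp (-(θ * τ ω)) ≤ Real.exp 0 := by
          apply Real.exp_le_exp.mpr; nlinarith
      _ = 1 := Real.exp_zero
  have hbase : ∫ ω, f ω ∂P ≤ 1 - θ/2 := by
    calc ∫ ω, f ω ∂P ≤ ∫ _ω, (1 - θ/2) ∂P := by
          apply integral_mono_ae hf_int (integrable_const _)
          filter_upwards [hτ1] with ω hω
          calc f ω ≤ Real.exp (-θ) := by
                apply Real.exp_le_exp.mpr; nlinarith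
            _ ≤ 1 - θ/2 := chord_aux θ hθ0.le hθ1.le
      _ = 1 - θ/2 := by simp
  refine ⟨?_, ?_, ?_⟩
  · -- α < 1
    intro hα1
    set A : Set Ω := {ω | θ⁻¹ ≤ τ ω} with hA
    have hAm : MeasurableSet A := measurableSet_le measurable_const hmeas
    have hθα : (0:ℝ) < θ ^ α := Real.rpow_pos_of_pos hθ0 α
    have hPA : P A = ENNReal.ofReal (θ ^ α) := by
      rw [htail θ⁻¹ (one_le_inv_iff₀.mpr ⟨hθ0, hθ1.le⟩)]
      congr 1
      rw [Real.inv_rpow hθ0.le, Real.rpow_neg hθ0.le, inv_inv]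
    calc ∫ ω, f ω ∂P ≤ ∫ ω, (1 - A.indicator (fun _ => (1:ℝ)/2) ω) ∂P := by
          apply integral_mono_ae hf_int
            ((integrable_const 1).sub ((integrable_const _).indicator hAm))
          filter_upwards [hτ1] with ω hω
          simp only [Pi.sub_apply]
          by_cases hmem : ω ∈ A
          · rw [Set.indicator_of_mem hmem]
            have hm : θ⁻¹ ≤ τ ω := hmem
            have h1 : (1:ℝ) ≤ θ * τ ω := by
              calc (1:ℝ) = θ * θ⁻¹ := by field_simp
                _ ≤ θ * τ ω := by apply mul_le_mul_of_nonneg_left hm hθ0.le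
            calc f ω ≤ Real.exp (-1) := Real.exp_le_exp.mpr (by linarith)
              _ ≤ 1 - 1/2 := by simpa using chord_aux 1 zero_le_one le_rfl
          · rw [Set.indicator_of_notMem hmem]
            simp only [sub_zero]
            calc f ω ≤ Real.exp 0 := Real.exp_le_exp.mpr (by nlinarith)
              _ = 1 := Real.exp_zero
      _ = 1 - (P A).toReal * (1/2) := by
          rw [integral_sub (integrable_const 1) ((integrable_const _).indicator hAm),
            integral_indicator_const _ hAm, integral_const]
          simp [smul_eq_mul, measureReal_def]
      _ = 1 - θ^α * (1/2) := by
          rw [hPA, ENNReal.toReal_ofReal hθα.le]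
      _ ≤ 1 - 1/10 * θ^α := by nlinarith
  · -- α = 1
    intro hα1
    subst hα1
    have hlog2 : Real.log 2 ≤ 1 := by
      have := Real.log_le_sub_one_of_pos (by norm_num : (0:ℝ) < 2); linarith
    have hlog2' : (0:ℝ) ≤ Real.log 2 := Real.log_nonneg (by norm_num)
    have hθinv1 : (1:ℝ) < 1/θ := by rw [one_div]; exact (one_lt_inv₀ hθ0).mpr hθ1
    have hlogθ0 : 0 < Real.log (1/θ) := Real.log_pos hθinv1
    by_cases hhalf : 1/2 < θ
    · have hlt : Real.log (1/θ) < Real.log 2 := by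
        apply Real.log_lt_log (by positivity)
        rw [one_div]
        rw [show (2:ℝ) = (1/2)⁻¹ by norm_num]
        exact inv_strictAnti₀ (by norm_num) hhalf
      calc ∫ ω, f ω ∂P ≤ 1 - θ/2 := hbase
        _ ≤ 1 - 1/10 * θ * Real.log (1/θ) := by nlinarith
    · push_neg at hhalf
      have hθinv2 : (2:ℝ) ≤ θ⁻¹ := by
        rw [show (2:ℝ) = (1/2)⁻¹ by norm_num]
        exact inv_anti₀ hθ0 hhalf
      set N := ⌊θ⁻¹⌋₊ with hN
      have hN2 : 2 ≤ N := Nat.le_floor (by exact_mod_cast hθinv2)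
      set n := Nat.log 2 N with hn
      have hn1 : 1 ≤ n := (Nat.le_log_iff_pow_le (by norm_num) (by omega)).mpr (by simpa)
      have h2n : ((2:ℝ))^n ≤ θ⁻¹ := by
        calc ((2:ℝ))^n = ((2^n : ℕ):ℝ) := by push_cast; ring
          _ ≤ (N:ℝ) := by exact_mod_cast Nat.pow_log_le_self 2 (by omega)
          _ ≤ θ⁻¹ := Nat.floor_le (by positivity)
      have hup : θ⁻¹ < (2:ℝ)^(n+1) := by
        have h1 : N < 2^(n+1) := Nat.lt_pow_succ_log_self (by norm_num) N
        have h2 : N + 1 ≤ 2^(n+1) := h1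
        calc θ⁻¹ < (N:ℝ) + 1 := Nat.lt_floor_add_one _
          _ ≤ ((2:ℝ))^(n+1) := by exact_mod_cast h2
      have hAm : ∀ k : ℕ, MeasurableSet {ω | (2:ℝ)^(k+1) ≤ τ ω} :=
        fun k => measurableSet_le measurable_const hmeas
      set S : Ω → ℝ := fun ω =>
        ∑ k ∈ Finset.range n, ({ω' | (2:ℝ)^(k+1) ≤ τ ω'}.indicator (fun _ => (2:ℝ)^k) ω) with hS
      have hS_int : Integrable S P :=
        integrable_finset_sum _ (fun k _ => (integrable_const _).indicator (hAm k))
      have hS_eq : ∀ ω, S ω = ∑ k ∈ Finset.range n, if (2:ℝ)^(k+1) ≤ τ ω then (2:ℝ)^k else 0 := by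
        intro ω
        apply Finset.sum_congr rfl
        intro k _
        simp [Set.indicator_apply, Set.mem_setOf_eq]
      have hS_integral : ∫ ω, S ω ∂P = n / 2 := by
        rw [hS, integral_finset_sum _ (fun k _ => (integrable_const _).indicator (hAm k))]
        have heach : ∀ k ∈ Finset.range n,
            ∫ ω, ({ω' | (2:ℝ)^(k+1) ≤ τ ω'}.indicator (fun _ => (2:ℝ)^k) ω) ∂P = 1/2 := by
          intro k _
          rw [integral_indicator_const _ (hAm k), measureReal_def]
          have h1 : (1:ℝ) ≤ (2:ℝ)^(k+1) := one_le_pow₀ (by norm_num)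
          rw [htail _ h1]
          rw [show ((2:ℝ)^(k+1)) ^ (-(1:ℝ)) = ((2:ℝ)^(k+1))⁻¹ from Real.rpow_neg_one _]
          rw [ENNReal.toReal_ofReal (by positivity), smul_eq_mul]
          rw [pow_succ]
          field_simp
        rw [Finset.sum_congr rfl heach, Finset.sum_const, Finset.card_range]
        simp
        ring
      calc ∫ ω, f ω ∂P ≤ ∫ ω, (1 - θ * S ω / 2) ∂P := by
            apply integral_mono_ae hf_int
              ((integrable_const 1).sub ((hS_int.const_mul θ).div_const 2))
            filter_upwards [hτ1] with ω hω
            have hτ0 : (0:ℝ) ≤ τ ω := by linarith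
            have h1 : S ω ≤ τ ω := by rw [hS_eq]; exact dyadic_sum_le _ hτ0 n
            have h2 : S ω ≤ 2^n - 1 := by rw [hS_eq]; exact dyadic_sum_le_pow _ n
            have h0 : 0 ≤ S ω := by
              rw [hS_eq]; apply Finset.sum_nonneg; intro k _; split <;> positivity
            have hmul : θ * (2:ℝ)^n ≤ 1 := by
              have h3 := mul_le_mul_of_nonneg_left h2n hθ0.le
              rwa [mul_inv_cancel₀ hθ0.ne'] at h3
            have hθS1 : θ * S ω ≤ 1 := by nlinarith
            calc f ω ≤ Real.exp (-(θ * S ω)) := Real.exp_le_exp.mpr (by nlinarith)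
              _ ≤ 1 - θ * S ω / 2 := chord_aux _ (by positivity) hθS1
        _ = 1 - θ * ((n:ℝ)/2) / 2 := by
            rw [integral_sub (integrable_const 1) ((hS_int.const_mul θ).div_const 2),
              integral_const, integral_div, integral_const_mul, hS_integral]
            simp [measure_univ]
        _ ≤ 1 - 1/10 * θ * Real.log (1/θ) := by
            have hloglt : Real.log (1/θ) < ((n:ℝ)+1) * Real.log 2 := by
              rw [one_div]
              calc Real.log θ⁻¹ < Real.log ((2:ℝ)^(n+1)) :=
                    Real.log_lt_log (by positivity) hup
                _ = ((n:ℝ)+1) * Real.log 2 := by rw [Real.log_pow]; push_cast; ring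
            have hn1' : (1:ℝ) ≤ (n:ℝ) := by exact_mod_cast hn1
            have hlog2n : Real.log (1/θ) ≤ 2*(n:ℝ) := by
              nlinarith [mul_le_mul_of_nonneg_left hlog2 (by positivity : (0:ℝ) ≤ (n:ℝ)+1)]
            have hfin := mul_le_mul_of_nonneg_left hlog2n hθ0.le
            have hθn : 0 ≤ θ * (n:ℝ) := by positivity
            nlinarith
  · -- 1 < α
    intro hα1
    calc ∫ ω, f ω ∂P ≤ 1 - θ/2 := hbase
      _ ≤ 1 - 1/10 * θ := by nlinarith
end

section
/- There exists a constant c > 0 such that for all θ ∈ (0,1): E[exp(θ τ_1) · 1{τ_1 ≤ 1/θ}] ≤ 1 + c θ^α if α < 1; E[exp(θ τ_1) · 1{τ_1 ≤ 1/θ}] ≤ 1 + c θ log(1/θ) if α = 1; and E[exp(θ τ_1) · 1{τ_1 ≤ 1/θ}] ≤ 1 + c θ if α > 1. -/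
set_option maxHeartbeats 1000000


open MeasureTheory ProbabilityTheory Filter

theorem truncated_exponential_moment_upper_bound
    {Ω : Type*} [MeasurableSpace Ω] (P : Measure Ω) [IsProbabilityMeasure P]
    (α : ℝ) (hα : 0 < α)
    (τ : Ω → ℝ) (hmeas : Measurable τ)
    (htail : ∀ u : ℝ, 1 ≤ u → P {ω | u ≤ τ ω} = ENNReal.ofReal (u ^ (-α))) :
    ∃ c : ℝ, 0 < c ∧ ∀ θ : ℝ, 0 < θ → θ < 1 →
      (α < 1 →
        (∫ ω in {ω | τ ω ≤ 1 / θ}, Real.exp (θ * τ ω) ∂P) ≤ 1 + c * θ ^ α) ∧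
      (α = 1 →
        (∫ ω in {ω | τ ω ≤ 1 / θ}, Real.exp (θ * τ ω) ∂P) ≤ 1 + c * θ * Real.log (1 / θ)) ∧
      (1 < α →
        (∫ ω in {ω | τ ω ≤ 1 / θ}, Real.exp (θ * τ ω) ∂P) ≤ 1 + c * θ) := by
  have he1 : (0:ℝ) < Real.exp 1 - 1 := by
    have := Real.exp_one_gt_d9; linarith
  set ℓ : ℝ := Real.log (Real.exp 1 / (Real.exp 1 - 1)) / 2 with hℓdef
  have hℓ : 0 < ℓ := by
    have h1 : (1:ℝ) < Real.exp 1 / (Real.exp 1 - 1) := by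
      rw [lt_div_iff₀ he1]; linarith
    have := Real.log_pos h1
    rw [hℓdef]; linarith
  refine ⟨(Real.exp 1 - 1) * (2 + |1 - α|⁻¹ + ℓ⁻¹), by positivity, ?_⟩
  intro θ hθ0 hθ1
  -- basic facts
  set M : ℝ := 1 / θ with hMdef
  have hM1 : 1 < M := by rw [hMdef]; exact one_lt_one_div hθ0 hθ1
  have hM0 : 0 < M := lt_trans one_pos hM1
  have hθM : θ * M = 1 := by rw [hMdef]; field_simp
  have hs : MeasurableSet {ω | τ ω ≤ M} := measurableSet_le hmeas measurable_const
  -- τ ≥ 1 a.e.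
  have h1 : ∀ᵐ ω ∂P, 1 ≤ τ ω := by
    have h := htail 1 le_rfl
    rw [Real.one_rpow, ENNReal.ofReal_one] at h
    have hms : MeasurableSet {ω | 1 ≤ τ ω} := measurableSet_le measurable_const hmeas
    have hcompl : P {ω | 1 ≤ τ ω}ᶜ = 0 := by
      rw [measure_compl hms (measure_ne_top _ _), h, measure_univ, tsub_self]
    rw [ae_iff]
    have hset : {ω | ¬ 1 ≤ τ ω} = {ω | 1 ≤ τ ω}ᶜ := by ext ω; simp
    rw [hset]; exact hcompl
  -- conversion to lintegral
  have hLHS : ∫ ω in {ω | τ ω ≤ M}, Real.exp (θ * τ ω) ∂P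
      = (∫⁻ ω in {ω | τ ω ≤ M}, ENNReal.ofReal (Real.exp (θ * τ ω)) ∂P).toReal := by
    apply integral_eq_lintegral_of_nonneg_ae
    · exact Filter.Eventually.of_forall fun ω => (Real.exp_pos _).le
    · exact (Real.measurable_exp.comp (hmeas.const_mul θ)).aestronglyMeasurable
  -- the truncated integral J
  set J : ℝ := ∫ t in (1:ℝ)..M, t ^ (-α) with hJdef
  have hJnonneg : 0 ≤ J := by
    rw [hJdef]
    apply intervalIntegral.integral_nonneg hM1.le
    intro t ht
    exact Real.rpow_nonneg (le_trans zero_le_one ht.1) _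
  -- step 2 : layer cake bound for truncated first moment
  have step2 : (∫⁻ ω in {ω | τ ω ≤ M}, ENNReal.ofReal (τ ω) ∂P) ≤ ENNReal.ofReal (1 + J) := by
    set f : Ω → ℝ := Set.indicator {ω | τ ω ≤ M} τ with hfdef
    have hfeq : (∫⁻ ω in {ω | τ ω ≤ M}, ENNReal.ofReal (τ ω) ∂P)
        = ∫⁻ ω, ENNReal.ofReal (f ω) ∂P := by
      rw [← lintegral_indicator hs]
      apply lintegral_congr
      intro ω
      by_cases hω : ω ∈ {ω | τ ω ≤ M} <;>
        simp [hfdef, Set.indicator_apply, hω]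
    have hfnn : 0 ≤ᵐ[P] f := by
      filter_upwards [h1] with ω h1ω
      by_cases hω : ω ∈ {ω | τ ω ≤ M} <;>
        simp [hfdef, Set.indicator_apply, hω] <;> linarith
    have hfm : AEMeasurable f P := (hmeas.indicator hs).aemeasurable
    rw [hfeq, MeasureTheory.lintegral_eq_lintegral_meas_le P hfnn hfm]
    have hmg : Measurable (fun t : ℝ => (Set.Ioc (0:ℝ) 1).indicator (fun _ => (1:ENNReal)) t
        + (Set.Ioc (1:ℝ) M).indicator (fun t => ENNReal.ofReal (t ^ (-α))) t) := by
      apply Measurable.add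
      · exact measurable_const.indicator measurableSet_Ioc
      · exact Measurable.indicator (by fun_prop) measurableSet_Ioc
    have hψ : ∀ t ∈ Set.Ioi (0:ℝ), P {a | t ≤ f a}
        ≤ (Set.Ioc (0:ℝ) 1).indicator (fun _ => (1:ENNReal)) t
          + (Set.Ioc (1:ℝ) M).indicator (fun t => ENNReal.ofReal (t ^ (-α))) t := by
      intro t ht
      rcases le_or_gt t 1 with ht1 | ht1
      · rw [Set.indicator_of_mem (Set.mem_Ioc.mpr ⟨Set.mem_Ioi.mp ht, ht1⟩)]
        exact le_add_right prob_le_one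
      · rcases le_or_gt t M with htM | htM
        · have hsub : {a | t ≤ f a} ⊆ {a | t ≤ τ a} := by
            intro a ha
            simp only [Set.mem_setOf_eq] at ha ⊢
            by_cases hma : a ∈ {ω | τ ω ≤ M}
            · rwa [hfdef, Set.indicator_of_mem hma] at ha
            · rw [hfdef, Set.indicator_of_notMem hma] at ha
              linarith [Set.mem_Ioi.mp ht]
          calc P {a | t ≤ f a} ≤ P {a | t ≤ τ a} := measure_mono hsub
            _ = ENNReal.ofReal (t ^ (-α)) := htail t ht1.le
            _ ≤ _ := by
                rw [Set.indicator_of_mem (Set.mem_Ioc.mpr ⟨ht1, htM⟩)]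
                exact le_add_self
        · have hempty : {a | t ≤ f a} = ∅ := by
            ext a
            simp only [Set.mem_setOf_eq, Set.mem_empty_iff_false, iff_false, not_le]
            by_cases hma : a ∈ {ω | τ ω ≤ M}
            · rw [hfdef, Set.indicator_of_mem hma]
              exact lt_of_le_of_lt hma htM
            · rw [hfdef, Set.indicator_of_notMem hma]
              linarith [Set.mem_Ioi.mp ht]
          rw [hempty, measure_empty]
          exact zero_le
    calc (∫⁻ t in Set.Ioi (0:ℝ), P {a | t ≤ f a})
        ≤ ∫⁻ t in Set.Ioi (0:ℝ), ((Set.Ioc (0:ℝ) 1).indicator (fun _ => (1:ENNReal)) t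
            + (Set.Ioc (1:ℝ) M).indicator (fun t => ENNReal.ofReal (t ^ (-α))) t) :=
          setLIntegral_mono hmg hψ
      _ = ENNReal.ofReal (1 + J) := by
          rw [lintegral_add_left (measurable_const.indicator measurableSet_Ioc)]
          have e1 : (∫⁻ t in Set.Ioi (0:ℝ), (Set.Ioc (0:ℝ) 1).indicator (fun _ => (1:ENNReal)) t)
              = 1 := by
            rw [lintegral_indicator measurableSet_Ioc, setLIntegral_one,
              Measure.restrict_apply measurableSet_Ioc,
              Set.inter_eq_left.mpr Set.Ioc_subset_Ioi_self, Real.volume_Ioc]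
            norm_num
          have hres : (volume.restrict (Set.Ioi (0:ℝ))).restrict (Set.Ioc (1:ℝ) M)
              = volume.restrict (Set.Ioc (1:ℝ) M) := by
            have hsub01 : Set.Ioc (1:ℝ) M ⊆ Set.Ioi 0 := fun t ht => lt_trans one_pos ht.1
            rw [Measure.restrict_restrict measurableSet_Ioc, Set.inter_eq_left.mpr hsub01]
          have hint : IntegrableOn (fun t : ℝ => t ^ (-α)) (Set.Ioc (1:ℝ) M) := by
            apply IntegrableOn.mono_set _ Set.Ioc_subset_Icc_self
            apply ContinuousOn.integrableOn_Icc
            apply ContinuousOn.rpow_const continuousOn_id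
            intro t ht
            exact Or.inl (ne_of_gt (lt_of_lt_of_le one_pos ht.1))
          have hnn : 0 ≤ᵐ[volume.restrict (Set.Ioc (1:ℝ) M)] fun t : ℝ => t ^ (-α) := by
            rw [EventuallyLE, ae_restrict_iff' measurableSet_Ioc]
            exact Filter.Eventually.of_forall fun t ht =>
              Real.rpow_nonneg (le_trans zero_le_one ht.1.le) _
          have e2 : (∫⁻ t in Set.Ioi (0:ℝ),
              (Set.Ioc (1:ℝ) M).indicator (fun t => ENNReal.ofReal (t ^ (-α))) t)
              = ENNReal.ofReal J := by
            rw [lintegral_indicator measurableSet_Ioc, hres,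
              ← MeasureTheory.ofReal_integral_eq_lintegral_ofReal hint hnn]
            congr 1
            rw [hJdef, intervalIntegral.integral_of_le hM1.le]
          rw [e1, e2, ENNReal.ofReal_add zero_le_one hJnonneg, ENNReal.ofReal_one]
  -- step 1 : pointwise convexity bound
  have step1 : (∫⁻ ω in {ω | τ ω ≤ M}, ENNReal.ofReal (Real.exp (θ * τ ω)) ∂P)
      ≤ P {ω | τ ω ≤ M} + ENNReal.ofReal ((Real.exp 1 - 1) * θ)
        * ∫⁻ ω in {ω | τ ω ≤ M}, ENNReal.ofReal (τ ω) ∂P := by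
    have hpt : ∀ᵐ ω ∂(P.restrict {ω | τ ω ≤ M}),
        ENNReal.ofReal (Real.exp (θ * τ ω))
          ≤ 1 + ENNReal.ofReal ((Real.exp 1 - 1) * θ) * ENNReal.ofReal (τ ω) := by
      filter_upwards [ae_restrict_of_ae h1,
        (ae_restrict_iff' hs).2 (Filter.Eventually.of_forall (fun ω hω => hω))] with ω h1ω hωs
      have hτM : τ ω ≤ M := hωs
      have hx0 : 0 ≤ θ * τ ω := by nlinarith
      have hx1 : θ * τ ω ≤ 1 := by nlinarith
      have hexp : Real.exp (θ * τ ω) ≤ 1 + (Real.exp 1 - 1) * (θ * τ ω) := by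
        have hc := convexOn_exp.2 (Set.mem_univ (0:ℝ)) (Set.mem_univ (1:ℝ))
          (by linarith : (0:ℝ) ≤ 1 - θ * τ ω) hx0 (by ring)
        simp only [smul_eq_mul, mul_zero, mul_one, zero_add, Real.exp_zero] at hc
        linarith
      calc ENNReal.ofReal (Real.exp (θ * τ ω))
          ≤ ENNReal.ofReal (1 + (Real.exp 1 - 1) * θ * (τ ω)) :=
            ENNReal.ofReal_le_ofReal (by nlinarith)
        _ = 1 + ENNReal.ofReal ((Real.exp 1 - 1) * θ) * ENNReal.ofReal (τ ω) := by
            rw [ENNReal.ofReal_add zero_le_one (by nlinarith), ENNReal.ofReal_one,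
              ENNReal.ofReal_mul (by positivity)]
    calc (∫⁻ ω in {ω | τ ω ≤ M}, ENNReal.ofReal (Real.exp (θ * τ ω)) ∂P)
        ≤ ∫⁻ ω in {ω | τ ω ≤ M}, (1 + ENNReal.ofReal ((Real.exp 1 - 1) * θ)
            * ENNReal.ofReal (τ ω)) ∂P := lintegral_mono_ae hpt
      _ = P {ω | τ ω ≤ M} + ENNReal.ofReal ((Real.exp 1 - 1) * θ)
            * ∫⁻ ω in {ω | τ ω ≤ M}, ENNReal.ofReal (τ ω) ∂P := by
          rw [lintegral_add_left measurable_const, setLIntegral_one,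
            lintegral_const_mul _ (hmeas.ennreal_ofReal)]
  -- key bound
  have keybound : (∫ ω in {ω | τ ω ≤ M}, Real.exp (θ * τ ω) ∂P)
      ≤ 1 + (Real.exp 1 - 1) * θ * (1 + J) := by
    have hX : 0 ≤ (Real.exp 1 - 1) * θ * (1 + J) := by positivity
    rw [hLHS]
    have hchain : (∫⁻ ω in {ω | τ ω ≤ M}, ENNReal.ofReal (Real.exp (θ * τ ω)) ∂P)
        ≤ 1 + ENNReal.ofReal ((Real.exp 1 - 1) * θ * (1 + J)) := by
      refine le_trans step1 ?_
      refine add_le_add prob_le_one ?_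
      calc ENNReal.ofReal ((Real.exp 1 - 1) * θ) * ∫⁻ ω in {ω | τ ω ≤ M}, ENNReal.ofReal (τ ω) ∂P
          ≤ ENNReal.ofReal ((Real.exp 1 - 1) * θ) * ENNReal.ofReal (1 + J) :=
            mul_le_mul_right step2 _
        _ = ENNReal.ofReal ((Real.exp 1 - 1) * θ * (1 + J)) := by
            rw [← ENNReal.ofReal_mul (by positivity)]
    have := ENNReal.toReal_mono (by finiteness) hchain
    rwa [ENNReal.toReal_add ENNReal.one_ne_top ENNReal.ofReal_ne_top, ENNReal.toReal_one,
      ENNReal.toReal_ofReal hX] at this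
  -- final arithmetic
  refine ⟨?_, ?_, ?_⟩
  · -- α < 1
    intro hlt
    have h1α : 0 < 1 - α := by linarith
    have habs : |1 - α| = 1 - α := abs_of_pos h1α
    have hJval : J = (M ^ (1 - α) - 1) / (1 - α) := by
      rw [hJdef, integral_rpow (Or.inr ⟨by intro h; apply h1α.ne'; linarith [neg_eq_iff_eq_neg.mp h], by
        rw [Set.uIcc_of_le hM1.le]; rintro ⟨h0, -⟩; linarith⟩)]
      rw [Real.one_rpow]
      ring_nf
    have hMrw : M ^ (1 - α) = θ ^ α / θ := by
      have h2 : M ^ (1 - α) = θ ^ (α - 1) := by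
        rw [hMdef, one_div, Real.inv_rpow hθ0.le, ← Real.rpow_neg hθ0.le]
        congr 1; ring
      rw [h2, Real.rpow_sub hθ0, Real.rpow_one]
    have hA : 0 < θ ^ α := Real.rpow_pos_of_pos hθ0 _
    have hθA : θ ≤ θ ^ α := by
      nth_rewrite 1 [← Real.rpow_one θ]
      exact Real.rpow_le_rpow_of_exponent_ge hθ0 hθ1.le hlt.le
    have hJle : J ≤ (θ ^ α / θ) / (1 - α) := by
      rw [hJval, hMrw]
      gcongr
      linarith
    have h2 : θ * (1 + J) ≤ θ ^ α + θ ^ α * (1 - α)⁻¹ := by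
      have : θ * ((θ ^ α / θ) / (1 - α)) = θ ^ α * (1 - α)⁻¹ := by
        field_simp
      nlinarith
    calc (∫ ω in {ω | τ ω ≤ M}, Real.exp (θ * τ ω) ∂P)
        ≤ 1 + (Real.exp 1 - 1) * θ * (1 + J) := keybound
      _ ≤ 1 + (Real.exp 1 - 1) * (2 + |1 - α|⁻¹ + ℓ⁻¹) * θ ^ α := by
          rw [habs]
          have hinv1 : 0 ≤ (1 - α)⁻¹ := by positivity
          have hinv2 : 0 ≤ ℓ⁻¹ := by positivity
          nlinarith [mul_nonneg hA.le hinv2, mul_nonneg hA.le hinv1]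
  · -- α = 1
    intro heq
    subst heq
    have hlog0 : 0 ≤ Real.log (1 / θ) := Real.log_nonneg (by rw [← hMdef]; exact hM1.le)
    rcases le_or_gt (Real.exp (-ℓ)) θ with hbig | hsmall
    · -- large θ : crude cap bound
      have capbound : (∫ ω in {ω | τ ω ≤ M}, Real.exp (θ * τ ω) ∂P)
          ≤ Real.exp 1 * (1 - θ ^ 2) := by
        rw [hLHS]
        have hmono : (∫⁻ ω in {ω | τ ω ≤ M}, ENNReal.ofReal (Real.exp (θ * τ ω)) ∂P)
            ≤ ∫⁻ _ in {ω | τ ω ≤ M}, ENNReal.ofReal (Real.exp 1) ∂P := by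
          apply lintegral_mono_ae
          filter_upwards [(ae_restrict_iff' hs).2
            (Filter.Eventually.of_forall (fun ω hω => hω))] with ω hωs
          apply ENNReal.ofReal_le_ofReal
          apply Real.exp_le_exp.mpr
          have hτM : τ ω ≤ M := hωs
          nlinarith
        have hPs : P {ω | τ ω ≤ M} ≤ ENNReal.ofReal (1 - θ ^ 2) := by
          have hsub2 : {ω | τ ω ≤ M} ⊆ {ω | M ^ 2 ≤ τ ω}ᶜ := by
            intro ω hω
            simp only [Set.mem_compl_iff, Set.mem_setOf_eq, not_le]
            have : τ ω ≤ M := hω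
            nlinarith
          have hms2 : MeasurableSet {ω | M ^ 2 ≤ τ ω} := measurableSet_le measurable_const hmeas
          have htail2 : P {ω | M ^ 2 ≤ τ ω} = ENNReal.ofReal (θ ^ 2) := by
            rw [htail (M ^ 2) (by nlinarith)]
            congr 1
            rw [Real.rpow_neg_one, hMdef]
            field_simp
          calc P {ω | τ ω ≤ M} ≤ P {ω | M ^ 2 ≤ τ ω}ᶜ := measure_mono hsub2
            _ = 1 - ENNReal.ofReal (θ ^ 2) := by
                rw [measure_compl hms2 (measure_ne_top _ _), measure_univ, htail2]
            _ = ENNReal.ofReal (1 - θ ^ 2) := by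
                rw [ENNReal.ofReal_sub 1 (by positivity), ENNReal.ofReal_one]
        have hchain : (∫⁻ ω in {ω | τ ω ≤ M}, ENNReal.ofReal (Real.exp (θ * τ ω)) ∂P)
            ≤ ENNReal.ofReal (Real.exp 1 * (1 - θ ^ 2)) := by
          refine le_trans hmono ?_
          rw [setLIntegral_const, ENNReal.ofReal_mul (Real.exp_pos 1).le]
          exact mul_le_mul_right hPs _
        have h1θ2 : 0 ≤ 1 - θ ^ 2 := by nlinarith
        have := ENNReal.toReal_mono ENNReal.ofReal_ne_top hchain
        rwa [ENNReal.toReal_ofReal (mul_nonneg (Real.exp_pos 1).le h1θ2)] at this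
      have hθ2 : (Real.exp 1 - 1) / Real.exp 1 ≤ θ ^ 2 := by
        have hee : Real.exp (-ℓ) ^ 2 = (Real.exp 1 - 1) / Real.exp 1 := by
          rw [sq, ← Real.exp_add]
          have harg : -ℓ + -ℓ = Real.log ((Real.exp 1 - 1) / Real.exp 1) := by
            rw [show (Real.exp 1 - 1) / Real.exp 1 = (Real.exp 1 / (Real.exp 1 - 1))⁻¹ from by
              rw [inv_div], Real.log_inv, hℓdef]
            ring
          rw [harg, Real.exp_log (div_pos he1 (Real.exp_pos 1))]
        calc (Real.exp 1 - 1) / Real.exp 1 = Real.exp (-ℓ) ^ 2 := hee.symm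
          _ ≤ θ ^ 2 := by
              apply pow_le_pow_left₀ (Real.exp_pos _).le hbig
      have hcap1 : Real.exp 1 * (1 - θ ^ 2) ≤ 1 := by
        have hepos := Real.exp_pos 1
        have : Real.exp 1 * ((Real.exp 1 - 1) / Real.exp 1) = Real.exp 1 - 1 := by
          field_simp
        nlinarith
      refine le_trans capbound (le_trans hcap1 ?_)
      have h0c : 0 ≤ (Real.exp 1 - 1) * (2 + |1 - (1:ℝ)|⁻¹ + ℓ⁻¹) * θ * Real.log (1 / θ) :=
        mul_nonneg (mul_nonneg (mul_nonneg he1.le (by positivity)) hθ0.le) hlog0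
      linarith
    · -- small θ : key bound
      have hJval : J = Real.log (1 / θ) := by
        rw [hJdef, ← hMdef]
        have hcong : ∀ t ∈ Set.uIcc (1:ℝ) M, t ^ (-(1:ℝ)) = 1 / t := by
          intro t ht
          rw [Set.uIcc_of_le hM1.le] at ht
          rw [Real.rpow_neg_one, one_div]
        rw [intervalIntegral.integral_congr hcong, integral_one_div (by
          rw [Set.uIcc_of_le hM1.le]; rintro ⟨h0, -⟩; linarith)]
        rw [div_one, hMdef]
      set Lg := Real.log (1 / θ) with hLgdef
      have hLgℓ : ℓ ≤ Lg := by
        have : Real.log θ < -ℓ := by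
          calc Real.log θ < Real.log (Real.exp (-ℓ)) := Real.log_lt_log hθ0 hsmall
            _ = -ℓ := Real.log_exp _
        rw [hLgdef, one_div, Real.log_inv]
        linarith
      have habs : |1 - (1:ℝ)| = 0 := by norm_num
      have hc2 : (Real.exp 1 - 1) * θ * (1 + J)
          ≤ (Real.exp 1 - 1) * (2 + |1 - (1:ℝ)|⁻¹ + ℓ⁻¹) * θ * Lg := by
        rw [habs, hJval]
        have h1 : 1 ≤ ℓ⁻¹ * Lg := by
          rw [← inv_mul_cancel₀ hℓ.ne']
          exact mul_le_mul_of_nonneg_left hLgℓ (by positivity)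
        have hLg0 : 0 < Lg := lt_of_lt_of_le hℓ hLgℓ
        simp only [inv_zero, add_zero]
        have hfac : 1 + Lg ≤ (2 + ℓ⁻¹) * Lg := by nlinarith
        nlinarith [mul_le_mul_of_nonneg_left hfac (mul_nonneg he1.le hθ0.le)]
      calc (∫ ω in {ω | τ ω ≤ M}, Real.exp (θ * τ ω) ∂P)
          ≤ 1 + (Real.exp 1 - 1) * θ * (1 + J) := keybound
        _ ≤ 1 + (Real.exp 1 - 1) * (2 + |1 - (1:ℝ)|⁻¹ + ℓ⁻¹) * θ * Lg := by linarith
  · -- α > 1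
    intro hgt
    have h1α : 1 - α < 0 := by linarith
    have habs : |1 - α| = α - 1 := by rw [abs_of_neg h1α]; ring
    have hJval : J = (M ^ (1 - α) - 1) / (1 - α) := by
      rw [hJdef, integral_rpow (Or.inr ⟨by intro h; apply h1α.ne; linarith [neg_eq_iff_eq_neg.mp h], by
        rw [Set.uIcc_of_le hM1.le]; rintro ⟨h0, -⟩; linarith⟩)]
      rw [Real.one_rpow]
      ring_nf
    have hB1 : M ^ (1 - α) ≤ 1 :=
      Real.rpow_le_one_of_one_le_of_nonpos hM1.le h1α.le
    have hB0 : 0 ≤ M ^ (1 - α) := Real.rpow_nonneg hM0.le _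
    have hJle : J ≤ (α - 1)⁻¹ := by
      rw [hJval]
      rw [show (M ^ (1 - α) - 1) / (1 - α) = (1 - M ^ (1 - α)) / (α - 1) from by
        rw [← neg_div_neg_eq]; ring_nf]
      rw [← one_div]
      gcongr
      · linarith
    calc (∫ ω in {ω | τ ω ≤ M}, Real.exp (θ * τ ω) ∂P)
        ≤ 1 + (Real.exp 1 - 1) * θ * (1 + J) := keybound
      _ ≤ 1 + (Real.exp 1 - 1) * (2 + |1 - α|⁻¹ + ℓ⁻¹) * θ := by
          rw [habs]
          have hinv1 : 0 ≤ (α - 1)⁻¹ := inv_nonneg.mpr (by linarith)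
          have hinv2 : 0 ≤ ℓ⁻¹ := by positivity
          have hfac : 1 + J ≤ 2 + (α - 1)⁻¹ + ℓ⁻¹ := by linarith
          nlinarith [mul_le_mul_of_nonneg_left hfac (mul_nonneg he1.le hθ0.le)]
end
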